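/- arXiv:math/0701634 — 2 statements merged into one kernel-verified Lean document; each statement's English description precedes it below -/
import Mathlib

section
/- Let E be an elliptic curve over a field F with complex multiplication by the ring of integers O_K of an imaginary quadratic field K = ℚ(√d), and let p be a prime invertible in F with p ∤ 2d. Let t ∈ E[p^r] be a point generating E[p^r] as an O_K/p^r-module. Then γ(t) := e_{p^r}(t, √d · t) is a primitive p^r-th root of unity. -/
/-!
If `γ = e(t, φ t)` had order dividing `m = p^(r-1)`, then, since `e(t, t) = 1`, the point `m • t`
would pair trivially with every `a • t + b • φ t`, i.e. with all of `A`; nondegeneracy forces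
`m • t = 0`, hence `m • φ t = 0`, and `A` would be a quotient of `(ℤ/m)²`, of order at most
`p^(2r-2) < p^(2r)`.
-/

lemma map_zsmul_eq_zpow_of_map_add {A M : Type*} [AddGroup A] [GroupWithZero M] {f : A → M}
    (hf : ∀ x y, f (x + y) = f x * f y) (hne : ∀ x, f x ≠ 0) (n : ℤ) (x : A) :
    f (n • x) = f x ^ n :=
  have hzero : f 0 = 1 :=
    mul_left_cancel₀ (hne 0) (by rw [← hf, add_zero, mul_one])
  (AddChar.mk f hzero hf).map_zsmul_eq_zpow n x

lemma nsmul_eq_zero_of_pairing_pow_eq_one {A M : Type*} [AddCommGroup A] [CommGroupWithZero M]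
    {e : A → A → M} (hadd_left : ∀ x x' y, e (x + x') y = e x y * e x' y)
    (hadd_right : ∀ x y y', e x (y + y') = e x y * e x y') (hne : ∀ x y, e x y ≠ 0)
    (halt : ∀ x, e x x = 1) (hnondeg : ∀ x, (∀ y, e x y = 1) → x = 0) {t u : A}
    (hgen : ∀ x : A, ∃ a b : ℤ, x = a • t + b • u) {m : ℕ} (hm : e t u ^ m = 1) :
    m • t = 0 := by
  have hleft (n : ℤ) (x y : A) : e (n • x) y = e x y ^ n :=
    map_zsmul_eq_zpow_of_map_add (hadd_left · · y) (hne · y) n x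
  have hright (n : ℤ) (x y : A) : e x (n • y) = e x y ^ n :=
    map_zsmul_eq_zpow_of_map_add (hadd_right x) (hne x) n y
  refine hnondeg _ fun y ↦ ?_
  obtain ⟨a, b, rfl⟩ := hgen y
  rw [← natCast_zsmul, hleft, hadd_right, hright, hright, halt, one_zpow, one_mul,
    ← zpow_mul, mul_comm, zpow_mul, zpow_natCast, hm, one_zpow]

lemma card_le_sq_of_generators_nsmul_eq_zero {A : Type*} [AddCommGroup A] {m : ℕ} [NeZero m]
    {t u : A} (hgen : ∀ x : A, ∃ a b : ℤ, x = a • t + b • u) (ht : m • t = 0)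
    (hu : m • u = 0) : Nat.card A ≤ m ^ 2 := by
  have htorsion (x : A) : m • x = 0 := by
    obtain ⟨a, b, rfl⟩ := hgen x
    rw [smul_add, smul_comm, ht, smul_zero, smul_comm m b, hu, smul_zero, add_zero]
  let := AddCommGroup.zmodModule htorsion
  have hsurj : Function.Surjective fun c : ZMod m × ZMod m ↦ c.1 • t + c.2 • u := by
    intro x
    obtain ⟨a, b, rfl⟩ := hgen x
    exact ⟨(a, b), by simp only [Int.cast_smul_eq_zsmul]⟩
  calc Nat.card A ≤ Nat.card (ZMod m × ZMod m) := Nat.card_le_card_of_surjective _ hsurj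
    _ = m ^ 2 := by rw [Nat.card_prod, Nat.card_zmod, sq]

theorem gamma_of_generator_is_primitive_root_general
    (p r : ℕ) (hp : p.Prime) (hr : 1 ≤ r)
    (A : Type*) [AddCommGroup A]
    (hcard : Nat.card A = p ^ (2 * r))
    (φ : A →+ A)
    (L : Type*) [Field L] (e : A → A → L)
    (hadd_left : ∀ x x' y, e (x + x') y = e x y * e x' y)
    (hadd_right : ∀ x y y', e x (y + y') = e x y * e x y')
    (halt : ∀ x, e x x = 1)
    (hord : ∀ x y, e x y ^ (p ^ r) = 1)
    (hnondeg : ∀ x, (∀ y, e x y = 1) → x = 0)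
    (t : A) (hgen : ∀ x : A, ∃ a b : ℤ, x = a • t + b • φ t) :
    IsPrimitiveRoot (e t (φ t)) (p ^ r) := by
  have := Fact.mk hp
  have : NeZero p := ⟨hp.ne_zero⟩
  obtain ⟨n, rfl⟩ : ∃ n, r = n + 1 := ⟨r - 1, by omega⟩
  have hne (x y : A) : e x y ≠ 0 := fun h ↦ by
    simpa [h, zero_pow (pow_ne_zero _ hp.ne_zero)] using hord x y
  have hnot : ¬e t (φ t) ^ p ^ n = 1 := fun h ↦ by
    have ht := nsmul_eq_zero_of_pairing_pow_eq_one hadd_left hadd_right hne halt hnondeg hgen h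
    have hφt : p ^ n • φ t = 0 := by rw [← map_nsmul, ht, map_zero]
    have hle := card_le_sq_of_generators_nsmul_eq_zero hgen ht hφt
    rw [hcard, ← pow_mul] at hle
    exact absurd (Nat.pow_le_pow_iff_right hp.one_lt |>.mp hle) (by omega)
  exact orderOf_eq_prime_pow hnot (hord t (φ t)) ▸ IsPrimitiveRoot.orderOf _

/-- Let `E` be an elliptic curve over a field `F` with CM by `O_K`,
`K = ℚ(√d)` imaginary quadratic, `p` a prime invertible in `F` with `p ∤ 2d`.  Here
`A` stands for `E[p^r]`, which is `p^r`-torsion of order `p^(2r)` (free of rank 1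
over `O_K/p^r`), `φ` for the CM action of `√d` (so `φ² = d`), and
`e : A × A → μ_{p^r} ⊆ L` for the Weil pairing (bilinear, alternating, valued in
`p^r`-th roots of unity, nondegenerate).  If `t` generates `E[p^r]` as an
`O_K/p^r`-module, then `γ(t) = e_{p^r}(t, √d·t)` is a primitive `p^r`-th root of
unity. -/
theorem gamma_of_generator_is_primitive_root
    (F : Type*) [Field F] (p r : ℕ) (hp : p.Prime) (hr : 1 ≤ r)
    (hinv : (p : F) ≠ 0) (d : ℤ) (hd : d < 0) (hdsf : Squarefree d)
    (hpd : ¬ (p : ℤ) ∣ 2 * d)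
    (A : Type*) [AddCommGroup A]
    (htor : ∀ x : A, (p ^ r) • x = 0)
    (hcard : Nat.card A = p ^ (2 * r))
    (φ : A →+ A) (hφ : ∀ x, φ (φ x) = d • x)
    (L : Type*) [Field L] (e : A → A → L)
    (hadd_left : ∀ x x' y, e (x + x') y = e x y * e x' y)
    (hadd_right : ∀ x y y', e x (y + y') = e x y * e x y')
    (halt : ∀ x, e x x = 1)
    (hord : ∀ x y, e x y ^ (p ^ r) = 1)
    (hnondeg : ∀ x, (∀ y, e x y = 1) → x = 0)
    (t : A) (hgen : ∀ x : A, ∃ a b : ℤ, x = a • t + b • φ t) :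
    IsPrimitiveRoot (e t (φ t)) (p ^ r) :=
  gamma_of_generator_is_primitive_root_general p r hp hr A hcard φ L e hadd_left hadd_right halt
    hord hnondeg t hgen
end

section
/- Let M be a free module of rank 2 over a commutative ring R with a perfect alternating pairing ⟨·,·⟩ : M × M → L into a rank-1 free R-module L (so ⋀²M ≅ L). Let φ ∈ End_R(M) satisfy φ² = d·id for a unit or nonzerodivisor d ∈ R, and suppose ⟨φ x, y⟩ = −⟨x, φ y⟩ for all x, y. Then for any e ∈ M, ⟨e, φ e⟩ generates L as an R-module if and only if e generates M as an R[φ]-module. -/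
/-!
Fix a basis `b₀, b₁` of `M`. An alternating pairing is the determinant in these coordinates times
`ω = ⟨b₀, b₁⟩`, so `⟨e, φ e⟩ = det(e, φ e) • ω`, and perfectness makes `ω` a generator of `L`.
Because `L` has rank one, `c • ω` generates `L` exactly when `c` is a unit, and a pair of vectors
spans `M` exactly when its determinant is a unit (a surjective endomorphism of a finite module
over a commutative ring is injective). Finally `φ² e = d • e` shows that the `R[φ]`-module
generated by `e` is the `R`-span of `e` and `φ e`.
-/

open Module Submodule

section

variable {R M N : Type*} [CommRing R] [AddCommGroup M] [Module R M] [AddCommGroup N] [Module R N]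

theorem Module.Basis.span_range_eq_top_iff_isUnit_det {ι : Type*} [Fintype ι] [DecidableEq ι]
    (b : Basis ι R M) (v : ι → M) : span R (Set.range v) = ⊤ ↔ IsUnit (b.det v) := by
  nontriviality R
  rw [← b.is_basis_iff_det]
  exact ⟨fun h => ⟨linearIndependent_of_top_le_span_of_card_eq_finrank h.ge
    (finrank_eq_card_basis b).symm, h⟩, And.right⟩

theorem Module.Basis.span_pair_eq_top_iff_isUnit_det (b : Basis (Fin 2) R M) (x y : M) :
    span R {x, y} = ⊤ ↔ IsUnit (b.det ![x, y]) := by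
  rw [← Matrix.range_cons_cons_empty x y ![], b.span_range_eq_top_iff_isUnit_det]

theorem span_singleton_smul_eq_top_iff {ω : M} (hM : 0 < finrank R M)
    (hω : span R {ω} = ⊤) (c : R) : span R {c • ω} = ⊤ ↔ IsUnit c := by
  refine ⟨fun h => ?_, fun hc => span_singleton_smul_eq hc ω ▸ hω⟩
  have hli : LinearIndependent R ![ω] :=
    linearIndependent_of_top_le_span_of_card_le_finrank (by simpa using hω.ge) (by rwa [Fintype.card_fin])
  obtain ⟨s, hs⟩ := mem_span_singleton.mp (h ▸ mem_top : ω ∈ span R {c • ω})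
  refine IsUnit.of_mul_eq_one_right s (hli.smul_left_injective 0 ?_)
  simpa [mul_smul] using hs

theorem LinearMap.apply_eq_basis_det_smul (B : M →ₗ[R] M →ₗ[R] N) (hB : ∀ x, B x x = 0)
    (b : Basis (Fin 2) R M) (x y : M) : B x y = b.det ![x, y] • B (b 0) (b 1) := by
  have hskew : B (b 1) (b 0) = - B (b 0) (b 1) := by
    rw [eq_neg_iff_add_eq_zero, add_comm]
    simpa [hB] using hB (b 0 + b 1)
  conv_lhs => rw [← b.sum_repr x, ← b.sum_repr y]
  simp only [Fin.sum_univ_two, map_add, map_smul, LinearMap.add_apply, LinearMap.smul_apply, hB,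
    hskew, Basis.det_apply, Matrix.det_fin_two, Basis.toMatrix_apply, smul_zero, smul_neg,
    zero_add, add_zero, Matrix.cons_val_zero, Matrix.cons_val_one, Matrix.cons_val_fin_one]
  module

theorem LinearMap.span_singleton_apply_basis_eq_top (B : M →ₗ[R] M →ₗ[R] N)
    (hB : ∀ x, B x x = 0) (hsurj : Function.Surjective B) (b : Basis (Fin 2) R M) :
    span R {B (b 0) (b 1)} = ⊤ := by
  rw [eq_top_iff]
  rintro l -
  obtain ⟨m, hm⟩ := hsurj ((b.coord 1).smulRight l)
  have hl : B m (b 1) = l := by simp [hm]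
  rw [← hl, B.apply_eq_basis_det_smul hB b m]
  exact mem_span_singleton.mpr ⟨_, rfl⟩

theorem Module.End.span_range_pow_apply_eq_span_pair {φ : Module.End R M} {e : M}
    (h : φ (φ e) ∈ span R {e, φ e}) :
    span R (Set.range fun n : ℕ => (φ ^ n) e) = span R {e, φ e} := by
  have hinv : span R {e, φ e} ≤ (span R {e, φ e}).comap φ := by
    rw [span_le, Set.insert_subset_iff, Set.singleton_subset_iff]
    exact ⟨subset_span (Set.mem_insert_of_mem _ rfl), h⟩
  refine le_antisymm (span_le.mpr ?_) (span_le.mpr ?_)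
  · rintro _ ⟨n, rfl⟩
    induction n with
    | zero => exact subset_span (Set.mem_insert _ _)
    | succ n ih =>
      beta_reduce
      rw [pow_succ', Module.End.mul_apply]
      exact hinv ih
  · rw [Set.insert_subset_iff, Set.singleton_subset_iff]
    exact ⟨subset_span ⟨0, by simp⟩, subset_span ⟨1, by simp⟩⟩

end

theorem pairing_generator_iff_module_generator_general
    (R : Type*) [CommRing R]
    (M : Type*) [AddCommGroup M] [Module R M] [Module.Free R M]
    (L : Type*) [AddCommGroup L] [Module R L]
    (hM : Module.rank R M = 2) (hL : Module.rank R L = 1)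
    (B : M →ₗ[R] M →ₗ[R] L)
    (halt : ∀ x : M, B x x = 0)
    (hperf₁ : Function.Bijective B)
    (φ : Module.End R M) (d : R)
    (hφ : φ ∘ₗ φ = d • LinearMap.id)
    (e : M) :
    Submodule.span R {B e (φ e)} = ⊤ ↔
      Submodule.span R (Set.range fun n : ℕ => (φ ^ n) e) = ⊤ := by
  nontriviality R
  have : Module.Finite R M := Module.finite_of_rank_eq_nat hM
  let b := Module.finBasisOfFinrankEq R M (finrank_eq_of_rank_eq hM)
  have hφφ : φ (φ e) ∈ span R {e, φ e} := by
    rw [show φ (φ e) = d • e from LinearMap.congr_fun hφ e]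
    exact smul_mem _ _ (subset_span (Set.mem_insert _ _))
  rw [Module.End.span_range_pow_apply_eq_span_pair hφφ, B.apply_eq_basis_det_smul halt b,
    span_singleton_smul_eq_top_iff (by simp [finrank_eq_of_rank_eq hL])
      (B.span_singleton_apply_basis_eq_top halt hperf₁.surjective b),
    b.span_pair_eq_top_iff_isUnit_det]

/-- Let `M` be free of rank 2 over a commutative ring `R` with a
perfect alternating pairing `B : M × M → L` into a free rank-1 module `L`
(so `⋀²M ≅ L`), and let `φ ∈ End(M)` satisfy `φ² = d·id` with `d` a unit or a
nonzerodivisor, and `B(φx, y) = −B(x, φy)`.  Then for `e ∈ M`, the element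
`B(e, φe)` generates `L` as an `R`-module if and only if `e` generates `M` as an
`R[φ]`-module. -/
theorem pairing_generator_iff_module_generator
    (R : Type*) [CommRing R]
    (M : Type*) [AddCommGroup M] [Module R M] [Module.Free R M]
    (L : Type*) [AddCommGroup L] [Module R L] [Module.Free R L]
    (hM : Module.rank R M = 2) (hL : Module.rank R L = 1)
    (B : M →ₗ[R] M →ₗ[R] L)
    (halt : ∀ x : M, B x x = 0)
    (hperf₁ : Function.Bijective B)
    (hperf₂ : Function.Bijective B.flip)
    (φ : Module.End R M) (d : R)
    (hφ : φ ∘ₗ φ = d • LinearMap.id)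
    (hd : IsUnit d ∨ d ∈ nonZeroDivisors R)
    (hanti : ∀ x y : M, B (φ x) y = - B x (φ y))
    (e : M) :
    Submodule.span R {B e (φ e)} = ⊤ ↔
      Submodule.span R (Set.range fun n : ℕ => (φ ^ n) e) = ⊤ :=
  pairing_generator_iff_module_generator_general R M L hM hL B halt hperf₁ φ d hφ e
end
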